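/- arXiv:1806.07082 — 2 statements merged into one kernel-verified Lean document; each statement's English description precedes it below -/
import Mathlib

section
/- Let V_1, ..., V_n be distinct coordinates of I, let j ∈ {1, ..., n}, let U_1, ..., U_m be distinct coordinates of I disjoint from {V_1, ..., V_n}, and let D ⊆ I be disjoint from {V_1, ..., V_j, U_1, ..., U_m}. For each i ∈ {1, ..., n} let C_i ⊆ I with V_i ∉ C_i, and for each k ∈ {1, ..., m} let E_k ⊆ I with U_k ∉ E_k. Assume: (i) V_j ∉ C_i for every i > j; (ii) for every assignment ω ∈ Ω, (∏_{k=1}^m P(U_k = ω_{U_k} | E_k = ω|_{E_k})) · (∏_{i=1}^j P(V_i = ω_{V_i} | C_i = ω|_{C_i})) = P({V_1, ..., V_j, U_1, ..., U_m} = ω | D = ω|_D); and (iii) V_j ⫫ U_k | (E_k \ {V_j}) for every k. Then for every assignment ω ∈ Ω: ∑_{v ∈ F_{V_j}} ∏_{i=1}^n P(V_i = ω'_{V_i} | C_i = ω'|_{C_i}) evaluated at the assignment ω' obtained from ω by setting coordinate V_j to v, equals (∏_{i=j+1}^n P(V_i = ω_{V_i} | C_i = ω|_{C_i})) · P({V_1,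 ..., V_{j-1}, U_1, ..., U_m} = ω | D = ω|_D) / ∏_{k=1}^m P(U_k = ω_{U_k} | (E_k \ {V_j}) = ω|_{E_k \ {V_j}}); in particular the left-hand side does not depend on the coordinate ω_{V_j}. -/
open Finset

/-- Marginal probability `P(S = ω|_S)` of a strictly positive pmf `P` on a finite
product: the sum of `P ω'` over all assignments `ω'` agreeing with `ω` on `S`. -/
noncomputable def marg {I : Type} [Fintype I] [DecidableEq I] {F : I → Type}
    [∀ i, Fintype (F i)] [∀ i, DecidableEq (F i)]
    (P : (∀ i, F i) → ℝ) (S : Finset I) (ω : ∀ i, F i) : ℝ :=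
  ∑ ω' : ∀ i, F i, if ∀ i ∈ S, ω' i = ω i then P ω' else 0

/-- Elementary conditional probability `P(T = ω|_T | S = ω|_S)`. -/
noncomputable def condP {I : Type} [Fintype I] [DecidableEq I] {F : I → Type}
    [∀ i, Fintype (F i)] [∀ i, DecidableEq (F i)]
    (P : (∀ i, F i) → ℝ) (T S : Finset I) (ω : ∀ i, F i) : ℝ :=
  marg P (S ∪ T) ω / marg P S ω

/-- Conditional independence of coordinates `a` and `b` given the set `S`. -/
def condIndep {I : Type} [Fintype I] [DecidableEq I] {F : I → Type}
    [∀ i, Fintype (F i)] [∀ i, DecidableEq (F i)]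
    (P : (∀ i, F i) → ℝ) (a b : I) (S : Finset I) : Prop :=
  ∀ ω, condP P {a, b} S ω = condP P {a} S ω * condP P {b} S ω

section Aux
variable {I : Type} [Fintype I] [DecidableEq I] {F : I → Type}
    [∀ i, Fintype (F i)] [∀ i, DecidableEq (F i)]
    {P : (∀ i, F i) → ℝ}

lemma marg_pos (hpos : ∀ ω, 0 < P ω) (S : Finset I) (ω : ∀ i, F i) :
    0 < marg P S ω := by
  unfold marg
  refine Finset.sum_pos' (fun ω' _ => ?_) ⟨ω, Finset.mem_univ ω, ?_⟩
  · split
    · exact (hpos _).le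
    · exact le_rfl
  · rw [if_pos fun i _ => rfl]; exact hpos ω

lemma condP_pos (hpos : ∀ ω, 0 < P ω) (T S : Finset I) (ω : ∀ i, F i) :
    0 < condP P T S ω :=
  div_pos (marg_pos hpos _ _) (marg_pos hpos _ _)

lemma marg_congr {S : Finset I} {ω ω'' : ∀ i, F i} (h : ∀ i ∈ S, ω i = ω'' i) :
    marg P S ω = marg P S ω'' := by
  unfold marg
  refine Finset.sum_congr rfl fun ω' _ => ?_
  have : (∀ i ∈ S, ω' i = ω i) ↔ (∀ i ∈ S, ω' i = ω'' i) :=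
    ⟨fun hh i hi => (hh i hi).trans (h i hi), fun hh i hi => (hh i hi).trans (h i hi).symm⟩
  simp only [this]

lemma marg_update {a : I} {S : Finset I} (ha : a ∉ S) (ω : ∀ i, F i) (v : F a) :
    marg P S (Function.update ω a v) = marg P S ω :=
  marg_congr fun i hi => Function.update_of_ne (by rintro rfl; exact ha hi) _ _

lemma condP_update {a : I} {T S : Finset I} (ha : a ∉ S) (ha' : a ∉ T)
    (ω : ∀ i, F i) (v : F a) :
    condP P T S (Function.update ω a v) = condP P T S ω := by
  unfold condP
  rw [marg_update (by simp [ha, ha']) , marg_update ha]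

lemma sum_marg_update {a : I} {S : Finset I} (ha : a ∈ S) (ω : ∀ i, F i) :
    ∑ v : F a, marg P S (Function.update ω a v) = marg P (S \ {a}) ω := by
  unfold marg
  rw [Finset.sum_comm]
  refine Finset.sum_congr rfl fun ω' _ => ?_
  have key : ∀ v : F a, (∀ i ∈ S, ω' i = Function.update ω a v i) ↔
      (v = ω' a ∧ ∀ i ∈ S \ {a}, ω' i = ω i) := by
    intro v
    constructor
    · intro h
      refine ⟨((h a ha).trans (Function.update_self _ _ _)).symm, fun i hi => ?_⟩
      rw [Finset.mem_sdiff, Finset.mem_singleton] at hi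
      rw [h i hi.1, Function.update_of_ne hi.2]
    · rintro ⟨hv, h⟩ i hi
      by_cases hia : i = a
      · subst hia; simp [← hv]
      · rw [Function.update_of_ne hia]
        exact h i (Finset.mem_sdiff.2 ⟨hi, by simpa using hia⟩)
  simp_rw [key]
  simp only [Finset.mem_sdiff, Finset.mem_singleton]
  by_cases hB : ∀ i : I, i ∈ S ∧ ¬ i = a → ω' i = ω i
  · rw [if_pos hB]
    have hx : ∀ x : F a, (x = ω' a ∧ ∀ i : I, i ∈ S ∧ ¬ i = a → ω' i = ω i) ↔ x = ω' a :=
      fun x => and_iff_left hB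
    simp_rw [hx]
    rw [Finset.sum_ite_eq' univ (ω' a) (fun _ => P ω')]
    simp
  · rw [if_neg hB]
    exact Finset.sum_eq_zero fun x _ => if_neg (fun h => hB h.2)

lemma condP_erase (hpos : ∀ ω, 0 < P ω) {a b : I} {S : Finset I}
    (hind : condIndep P a b (S \ {a})) (hmem : a ∈ S) (ω : ∀ i, F i) :
    condP P {b} S ω = condP P {b} (S \ {a}) ω := by
  have hS : S \ {a} ∪ {a} = S :=
    Finset.sdiff_union_of_subset (Finset.singleton_subset_iff.2 hmem)
  have hSb : S \ {a} ∪ {a, b} = S ∪ {b} := by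
    rw [show ({a, b} : Finset I) = {a} ∪ {b} by rfl, ← Finset.union_assoc, hS]
  have h := hind ω
  unfold condP at h ⊢
  rw [hSb, hS] at h
  have p1 := (marg_pos hpos (S \ {a}) ω).ne'
  have p2 := (marg_pos hpos S ω).ne'
  field_simp at h ⊢
  nlinarith [h, marg_pos hpos (S \ {a}) ω, marg_pos hpos S ω,
    marg_pos hpos (S ∪ {b}) ω, marg_pos hpos (S \ {a} ∪ {b}) ω]

end Aux

theorem simplification_value {I : Type} [Fintype I] [DecidableEq I] {F : I → Type}
    [∀ i, Fintype (F i)] [∀ i, DecidableEq (F i)] [∀ i, Nonempty (F i)]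
    (P : (∀ i, F i) → ℝ) (hpos : ∀ ω, 0 < P ω) (hsum : ∑ ω, P ω = 1)
    {n m : ℕ} (V : Fin n → I) (hV : Function.Injective V)
    (U : Fin m → I) (hU : Function.Injective U)
    (hVU : ∀ i k, V i ≠ U k)
    (j : Fin n) (D : Finset I)
    (hDV : ∀ i : Fin n, i ≤ j → V i ∉ D) (hDU : ∀ k, U k ∉ D)
    (C : Fin n → Finset I) (hC : ∀ i, V i ∉ C i)
    (E : Fin m → Finset I) (hE : ∀ k, U k ∉ E k)
    (h1 : ∀ i : Fin n, j < i → V j ∉ C i)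
    (h2 : ∀ ω, (∏ k, condP P {U k} (E k) ω) *
        (∏ i ∈ univ.filter (· ≤ j), condP P {V i} (C i) ω) =
      condP P ((univ.filter (· ≤ j)).image V ∪ univ.image U) D ω)
    (h3 : ∀ k, condIndep P (V j) (U k) (E k \ {V j})) :
    ∀ ω, (∑ v : F (V j), ∏ i, condP P {V i} (C i) (Function.update ω (V j) v)) =
      (∏ i ∈ univ.filter (fun i => j < i), condP P {V i} (C i) ω) *
        condP P ((univ.filter (· < j)).image V ∪ univ.image U) D ω /
        ∏ k, condP P {U k} (E k \ {V j}) ω := by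
  intro ω
  set a := V j with ha_def
  set Aj := (univ.filter (· ≤ j)).image V ∪ univ.image U with hAj_def
  set Aj' := (univ.filter (· < j)).image V ∪ univ.image U with hAj'_def
  set Q := ∏ k, condP P {U k} (E k \ {a}) ω with hQ_def
  have haD : a ∉ D := hDV j le_rfl
  have hQpos : 0 < Q :=
    Finset.prod_pos fun k _ => condP_pos hpos _ _ _
  have hUk : ∀ (k : Fin m) (v : F a), condP P {U k} (E k) (Function.update ω a v)
      = condP P {U k} (E k \ {a}) ω := by
    intro k v
    have hb : a ∉ ({U k} : Finset I) := by
      simp only [Finset.mem_singleton]; exact hVU j k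
    by_cases hmem : a ∈ E k
    · rw [condP_erase hpos (h3 k) hmem]
      exact condP_update (by simp) hb _ _
    · rw [show E k \ {a} = E k from Finset.sdiff_eq_self_of_disjoint
        (Finset.disjoint_singleton_right.2 hmem)] at *
      exact condP_update hmem hb _ _
  have haAj : a ∈ Aj :=
    Finset.mem_union_left _ (Finset.mem_image.2 ⟨j, by simp, rfl⟩)
  have hAjsd : Aj \ {a} = Aj' := by
    ext x
    simp only [hAj_def, hAj'_def, Finset.mem_sdiff, Finset.mem_union, Finset.mem_image,
      Finset.mem_filter, Finset.mem_univ, true_and, Finset.mem_singleton]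
    constructor
    · rintro ⟨(⟨i, hij, rfl⟩ | ⟨k, rfl⟩), hne⟩
      · exact Or.inl ⟨i, lt_of_le_of_ne hij (fun h => hne (by rw [h])), rfl⟩
      · exact Or.inr ⟨k, rfl⟩
    · rintro (⟨i, hij, rfl⟩ | ⟨k, rfl⟩)
      · exact ⟨Or.inl ⟨i, le_of_lt hij, rfl⟩, fun h => absurd (hV h) (ne_of_lt hij)⟩
      · exact ⟨Or.inr ⟨k, rfl⟩, fun h => hVU j k h.symm⟩
  have hsumA : ∑ v : F a, condP P Aj D (Function.update ω a v) = condP P Aj' D ω := by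
    unfold condP
    have hmd : ∀ v : F a, marg P D (Function.update ω a v) = marg P D ω :=
      fun v => marg_update haD ω v
    simp_rw [hmd, ← Finset.sum_div]
    congr 1
    rw [sum_marg_update (Finset.mem_union_right _ haAj) ω,
      Finset.union_sdiff_distrib, hAjsd,
      Finset.sdiff_eq_self_of_disjoint (Finset.disjoint_singleton_right.2 haD)]
  have hv : ∀ v : F a, ∏ i, condP P {V i} (C i) (Function.update ω a v) =
      (∏ i ∈ univ.filter (fun i => j < i), condP P {V i} (C i) ω) *
        (condP P Aj D (Function.update ω a v) / Q) := by
    intro v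
    rw [← Finset.prod_filter_mul_prod_filter_not univ (· ≤ j)]
    have e1 : ∏ i ∈ univ.filter (fun i => ¬ i ≤ j), condP P {V i} (C i)
        (Function.update ω a v)
        = ∏ i ∈ univ.filter (fun i => j < i), condP P {V i} (C i) ω := by
      simp only [not_le]
      refine Finset.prod_congr rfl fun i hi => ?_
      rw [Finset.mem_filter] at hi
      refine condP_update (h1 i hi.2) ?_ _ _
      simp only [Finset.mem_singleton]
      exact fun h => absurd (hV h) (ne_of_lt hi.2)
    have e2 : ∏ i ∈ univ.filter (· ≤ j), condP P {V i} (C i) (Function.update ω a v)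
        = condP P Aj D (Function.update ω a v) / Q := by
      have h2' := h2 (Function.update ω a v)
      have hQ : ∏ k, condP P {U k} (E k) (Function.update ω a v) = Q :=
        Finset.prod_congr rfl fun k _ => hUk k v
      rw [hQ] at h2'
      rw [eq_div_iff hQpos.ne', mul_comm]
      exact h2'
    rw [e1, e2]
    ring
  calc ∑ v : F a, ∏ i, condP P {V i} (C i) (Function.update ω a v)
      = ∑ v : F a, (∏ i ∈ univ.filter (fun i => j < i), condP P {V i} (C i) ω) *
          (condP P Aj D (Function.update ω a v) / Q) :=
        Finset.sum_congr rfl fun v _ => hv v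
    _ = (∏ i ∈ univ.filter (fun i => j < i), condP P {V i} (C i) ω) *
          ((∑ v : F a, condP P Aj D (Function.update ω a v)) / Q) := by
        rw [← Finset.mul_sum, ← Finset.sum_div]
    _ = (∏ i ∈ univ.filter (fun i => j < i), condP P {V i} (C i) ω) *
          condP P Aj' D ω / Q := by
        rw [hsumA, mul_div_assoc]
end

section
/- Let W, X, Z, Y be random variables with values in nonempty finite types and strictly positive joint probability mass function P. If Z ⫫ W | X, then for all values y and z: ∑_{x} ∑_{w} P(Y = y | X = x, W = w, Z = z) · P(X = x | W = w) · P(W = w) = ∑_{x} P(Y = y | X = x, Z = z) · P(X = x). -/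
/-- Simplification-sets example (Figure 2): if `Z ⫫ W | X` then
`∑_{x,w} P(Y=y|X=x,W=w,Z=z) P(X=x|W=w) P(W=w) = ∑_x P(Y=y|X=x,Z=z) P(X=x)`,
with all conditional probabilities written as elementary ratios of marginals of the
strictly positive joint pmf `P`. -/
theorem simplification_sets_example {W X Z Y : Type}
    [Fintype W] [Fintype X] [Fintype Z] [Fintype Y]
    [Nonempty W] [Nonempty X] [Nonempty Z] [Nonempty Y]
    (P : W → X → Z → Y → ℝ)
    (hpos : ∀ w x z y, 0 < P w x z y)
    (hsum : ∑ w, ∑ x, ∑ z, ∑ y, P w x z y = 1)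
    -- Z ⫫ W | X : P(Z=z, W=w | X=x) = P(Z=z | X=x) * P(W=w | X=x)
    (hCI : ∀ (z : Z) (w : W) (x : X),
      (∑ y, P w x z y) / (∑ w', ∑ z', ∑ y, P w' x z' y) =
        ((∑ w', ∑ y, P w' x z y) / (∑ w', ∑ z', ∑ y, P w' x z' y)) *
        ((∑ z', ∑ y, P w x z' y) / (∑ w', ∑ z', ∑ y, P w' x z' y))) :
    ∀ (y : Y) (z : Z),
      (∑ x, ∑ w,
        (P w x z y / (∑ y', P w x z y')) *
        ((∑ z', ∑ y', P w x z' y') / (∑ x', ∑ z', ∑ y', P w x' z' y')) *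
        (∑ x', ∑ z', ∑ y', P w x' z' y')) =
      ∑ x, ((∑ w, P w x z y) / (∑ w, ∑ y', P w x z y')) *
        (∑ w, ∑ z', ∑ y', P w x z' y') := by
  intro y z
  refine Finset.sum_congr rfl fun x _ => ?_
  have hT : (0:ℝ) < ∑ w, ∑ z', ∑ y', P w x z' y' :=
    Finset.sum_pos (fun w _ => Finset.sum_pos (fun z' _ => Finset.sum_pos
      (fun y' _ => hpos w x z' y') Finset.univ_nonempty) Finset.univ_nonempty)
      Finset.univ_nonempty
  have hA : (0:ℝ) < ∑ w, ∑ y', P w x z y' :=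
    Finset.sum_pos (fun w _ => Finset.sum_pos (fun y' _ => hpos w x z y')
      Finset.univ_nonempty) Finset.univ_nonempty
  have hS1 : ∀ w, (0:ℝ) < ∑ y', P w x z y' := fun w =>
    Finset.sum_pos (fun y' _ => hpos w x z y') Finset.univ_nonempty
  have hS2 : ∀ w, (0:ℝ) < ∑ z', ∑ y', P w x z' y' := fun w =>
    Finset.sum_pos (fun z' _ => Finset.sum_pos (fun y' _ => hpos w x z' y')
      Finset.univ_nonempty) Finset.univ_nonempty
  have hS3 : ∀ w, (0:ℝ) < ∑ x', ∑ z', ∑ y', P w x' z' y' := fun w =>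
    Finset.sum_pos (fun x' _ => Finset.sum_pos (fun z' _ => Finset.sum_pos
      (fun y' _ => hpos w x' z' y') Finset.univ_nonempty) Finset.univ_nonempty)
      Finset.univ_nonempty
  have key : ∀ w, (∑ y', P w x z y') * (∑ w, ∑ z', ∑ y', P w x z' y') =
      (∑ w, ∑ y', P w x z y') * (∑ z', ∑ y', P w x z' y') := by
    intro w
    have h := hCI z w x
    field_simp at h
    refine mul_right_cancel₀ (ne_of_gt hT) ?_
    linear_combination (∑ w, ∑ z', ∑ y', P w x z' y') * h
  calc (∑ w, (P w x z y / (∑ y', P w x z y')) *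
        ((∑ z', ∑ y', P w x z' y') / (∑ x', ∑ z', ∑ y', P w x' z' y')) *
        (∑ x', ∑ z', ∑ y', P w x' z' y'))
      = ∑ w, P w x z y * (∑ w, ∑ z', ∑ y', P w x z' y') / (∑ w, ∑ y', P w x z y') := by
        refine Finset.sum_congr rfl fun w _ => ?_
        have hk := key w
        field_simp [(hS1 w).ne', (hS3 w).ne', hA.ne']
        linear_combination (-(P w x z y)) * hk
    _ = ((∑ w, P w x z y) / (∑ w, ∑ y', P w x z y')) * (∑ w, ∑ z', ∑ y', P w x z' y') := by
        rw [← Finset.sum_div, ← Finset.sum_mul]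
        ring
end
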